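/- Let L be a complete nonarchimedean field extension of ℚ_p, m ≥ 1, and f(z) = Σₗ aₗ zˡ with v(aₗ) + m·l → ∞. For s' ∈ pᵐℤ_p and z ∈ pᵐℤ_p one has f((1 + s')·z) = Σ_{q=0}^∞ (s')^q · f_q(z) where f_q(z) = Σ_{l ≥ q} aₗ · C(l, q) · zˡ, and v_C(f_q) ≥ inf_{l ≥ q}(v(aₗ) + m·l), so that v_C(f_q) + m·q → ∞ as q → ∞. -/

import Mathlib

/-!
Bound the terms `s^q a_{j+q} C(j+q, q) z^{j+q}` of the double series by `‖a_l‖ r^l` with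
`l = j + q`. Only finitely many pairs `(q, j)` share a given `l`, so the double family tends to zero
along the cofinite filter. In the complete ultrametric field `L` this makes it summable. Summing it
along antidiagonals gives `Σ_l a_l ((1+s)z)^l` by the binomial theorem, and summing it by columns
gives `Σ_q s^q f_q(z)`. Since `‖C(l, q)‖ ≤ 1` in an ultrametric field, the weighted coefficients of
`f_q` are dominated by the tail `sup_{l ≥ q} ‖a_l‖ r^l`, which tends to zero.
-/

open Filter Topology Finset.HasAntidiagonal

theorem tendsto_add_cofinite_atTop : Tendsto (fun x : ℕ × ℕ => x.1 + x.2) cofinite atTop := by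
  rw [← Nat.cofinite_eq_atTop]
  refine Tendsto.cofinite_of_finite_preimage_singleton fun n => Set.Finite.to_subtype ?_
  exact (antidiagonal n).finite_toSet.subset fun x hx => by simpa using hx

theorem tendsto_iSup_add_nhds_zero {M : ℕ → ℝ} (h0 : ∀ l, 0 ≤ M l)
    (hM : Tendsto M atTop (𝓝 0)) : Tendsto (fun q => ⨆ j, M (j + q)) atTop (𝓝 0) := by
  refine tendsto_order.2 ⟨fun b hb => Eventually.of_forall fun q =>
    hb.trans_le (Real.iSup_nonneg fun j => h0 _), fun ε hε => ?_⟩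
  obtain ⟨N, hN⟩ := eventually_atTop.1 (hM.eventually (gt_mem_nhds (half_pos hε)))
  refine eventually_atTop.2 ⟨N, fun q hq => ?_⟩
  exact (Real.iSup_le (fun j => (hN _ (by omega)).le) (half_pos hε).le).trans_lt
    (half_lt_self hε)

theorem summable_of_norm_le_of_tendsto_zero {E ι : Type*} [NormedAddCommGroup E]
    [IsUltrametricDist E] [CompleteSpace E] {f : ι → E} {g : ι → ℝ} (hfg : ∀ i, ‖f i‖ ≤ g i)
    (hg : Tendsto g cofinite (𝓝 0)) : Summable f :=
  NonarchimedeanAddGroup.summable_of_tendsto_cofinite_zero <|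
    tendsto_zero_iff_norm_tendsto_zero.2 <| squeeze_zero (fun _ => norm_nonneg _) hfg hg

theorem zpow_neg_natCast_mul {α : Type*} [DivisionMonoid α] (x : α) (m n : ℕ) :
    x ^ (-(m * n : ℤ)) = (x ^ (-(m : ℤ))) ^ n := by
  rw [← zpow_natCast, ← zpow_mul, neg_mul]

section Dilation

variable {L : Type*} [NormedField L]

/-- The paper's `f_q(z)`. -/
noncomputable def dilationCoeff (a : ℕ → L) (z : L) (q : ℕ) : L :=
  ∑' j, a (j + q) * ((j + q).choose q : L) * z ^ (j + q)

theorem norm_mul_pow_le {a : ℕ → L} {r : ℝ} {w : L} (hw : ‖w‖ ≤ r) (l : ℕ) :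
    ‖a l * w ^ l‖ ≤ ‖a l‖ * r ^ l := by
  rw [norm_mul, norm_pow]
  exact mul_le_mul_of_nonneg_left (pow_le_pow_left₀ (norm_nonneg w) hw l) (norm_nonneg _)

variable [IsUltrametricDist L]

theorem norm_mul_natCast_le (x : L) (n : ℕ) : ‖x * n‖ ≤ ‖x‖ := by
  rw [norm_mul]
  exact mul_le_of_le_one_right (norm_nonneg x) (IsUltrametricDist.norm_natCast_le_one L n)

theorem norm_one_add_mul_le {s z : L} {r : ℝ} (hs : ‖s‖ ≤ 1) (hz : ‖z‖ ≤ r) :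
    ‖(1 + s) * z‖ ≤ r := by
  rw [norm_mul, add_comm]
  exact (mul_le_of_le_one_left (norm_nonneg z)
    ((IsUltrametricDist.norm_add_one_le_max_norm_one s).trans (max_le hs le_rfl))).trans hz

variable {a : ℕ → L} {r : ℝ}

theorem norm_mul_choose_mul_pow_le {z : L} (hz : ‖z‖ ≤ r) (l q : ℕ) :
    ‖a l * (l.choose q : L) * z ^ l‖ ≤ ‖a l‖ * r ^ l := by
  rw [norm_mul]
  exact mul_le_mul (norm_mul_natCast_le _ _) (by simpa using norm_mul_pow_le (a := 1) hz l)
    (norm_nonneg _) (norm_nonneg _)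

theorem norm_mul_choose_mul_pow_le_iSup (ha : Tendsto (fun l => ‖a l‖ * r ^ l) atTop (𝓝 0))
    (hr : 0 ≤ r) (q j : ℕ) :
    ‖a (j + q) * ((j + q).choose q : L)‖ * r ^ (j + q) ≤ ⨆ l, ‖a (l + q)‖ * r ^ (l + q) :=
  (mul_le_mul_of_nonneg_right (norm_mul_natCast_le _ _) (pow_nonneg hr _)).trans
    (le_ciSup (ha.comp (tendsto_add_atTop_nat q)).bddAbove_range j)

theorem tendsto_iSup_norm_mul_choose_mul_pow (ha : Tendsto (fun l => ‖a l‖ * r ^ l) atTop (𝓝 0))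
    (hr : 0 ≤ r) (hr₁ : r ≤ 1) :
    Tendsto (fun q => (⨆ j, ‖a (j + q) * ((j + q).choose q : L)‖ * r ^ (j + q)) * r ^ q)
      atTop (𝓝 0) := by
  have h_nonneg : ∀ q, 0 ≤ ⨆ j, ‖a (j + q) * ((j + q).choose q : L)‖ * r ^ (j + q) :=
    fun q => Real.iSup_nonneg fun j => by positivity
  refine squeeze_zero (fun q => mul_nonneg (h_nonneg q) (pow_nonneg hr q)) (fun q => ?_)
    (tendsto_iSup_add_nhds_zero (fun l => by positivity) ha)
  exact (mul_le_of_le_one_right (h_nonneg q) (pow_le_one₀ hr hr₁)).trans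
    (ciSup_le (norm_mul_choose_mul_pow_le_iSup ha hr q))

section Complete

variable [CompleteSpace L] (ha : Tendsto (fun l => ‖a l‖ * r ^ l) atTop (𝓝 0))
include ha

theorem summable_mul_pow {w : L} (hw : ‖w‖ ≤ r) : Summable fun l => a l * w ^ l :=
  summable_of_norm_le_of_tendsto_zero (norm_mul_pow_le hw) (Nat.cofinite_eq_atTop ▸ ha)

theorem summable_dilationCoeff {z : L} (hz : ‖z‖ ≤ r) (q : ℕ) :
    Summable fun j => a (j + q) * ((j + q).choose q : L) * z ^ (j + q) :=
  summable_of_norm_le_of_tendsto_zero (fun j => norm_mul_choose_mul_pow_le hz (j + q) q)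
    (Nat.cofinite_eq_atTop ▸ ha.comp (tendsto_add_atTop_nat q))

theorem hasSum_pow_mul_dilationCoeff {s z : L} (hs : ‖s‖ ≤ 1) (hz : ‖z‖ ≤ r) :
    HasSum (fun q => s ^ q * dilationCoeff a z q) (∑' l, a l * ((1 + s) * z) ^ l) := by
  set F : ℕ × ℕ → L := fun x =>
    s ^ x.1 * (a (x.2 + x.1) * ((x.2 + x.1).choose x.1 : L) * z ^ (x.2 + x.1)) with hF
  have hF_summable : Summable F := by
    refine summable_of_norm_le_of_tendsto_zero
      (g := fun x => ‖a (x.2 + x.1)‖ * r ^ (x.2 + x.1)) (fun x => ?_) ?_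
    · rw [hF, norm_mul, norm_pow]
      exact (mul_le_of_le_one_left (norm_nonneg _) (pow_le_one₀ (norm_nonneg s) hs)).trans
        (norm_mul_choose_mul_pow_le hz _ _)
    · exact (ha.comp tendsto_add_cofinite_atTop).congr fun x => by
        simp only [Function.comp_apply, add_comm]
  have h_diag : ∀ n, ∑ x ∈ antidiagonal n, F x = a n * ((1 + s) * z) ^ n := by
    intro n
    calc ∑ x ∈ antidiagonal n, F x
        = a n * z ^ n * ∑ x ∈ antidiagonal n, s ^ x.1 * 1 ^ x.2 * (n.choose x.1 : L) := by
          rw [Finset.mul_sum]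
          refine Finset.sum_congr rfl fun x hx => ?_
          rw [mem_antidiagonal] at hx
          simp only [hF, show x.2 + x.1 = n by omega]
          ring
      _ = a n * ((1 + s) * z) ^ n := by
          rw [Finset.Nat.sum_antidiagonal_eq_sum_range_succ
            (fun i j => s ^ i * 1 ^ j * (n.choose i : L)), ← add_pow, add_comm s, mul_pow]
          ring
  have h_rows : HasSum (fun n => a n * ((1 + s) * z) ^ n) (∑' x, F x) := by
    refine ((Finset.HasAntidiagonal.sigmaAntidiagonalEquivProd.hasSum_iff.2
      hF_summable.hasSum).sigma fun n => ?_)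
    have h_fin := hasSum_fintype fun c : antidiagonal n => F c
    rwa [Finset.sum_coe_sort, h_diag] at h_fin
  have h_cols : HasSum (fun q => ∑' j, F (q, j)) (∑' x, F x) :=
    hF_summable.hasSum.prod_fiberwise fun q =>
      ((summable_dilationCoeff ha hz q).mul_left (s ^ q)).hasSum
  rw [h_rows.tsum_eq]
  simpa only [hF, tsum_mul_left, dilationCoeff] using h_cols

end Complete

end Dilation

theorem stmt_9_general (p : ℕ) [Fact p.Prime] (L : Type*) [NontriviallyNormedField L]
    [CompleteSpace L] (hna : IsNonarchimedean fun x : L => ‖x‖)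
    (ι : ℚ_[p] →+* L) (hι : ∀ x, ‖ι x‖ = ‖x‖)
    (m : ℕ) (a : ℕ → L)
    (ha : Tendsto (fun l : ℕ => ‖a l‖ * (p : ℝ) ^ (-(m * l : ℤ))) atTop (𝓝 0))
    (s' z : ℚ_[p]) (hs : ‖s'‖ ≤ (p : ℝ) ^ (-(m : ℤ))) (hz : ‖z‖ ≤ (p : ℝ) ^ (-(m : ℤ))) :
    Summable (fun l : ℕ => a l * ι ((1 + s') * z) ^ l) ∧
    (∀ q : ℕ, Summable fun j : ℕ =>
      a (j + q) * ((j + q).choose q : L) * ι z ^ (j + q)) ∧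
    Summable (fun q : ℕ => ι s' ^ q *
      ∑' j : ℕ, a (j + q) * ((j + q).choose q : L) * ι z ^ (j + q)) ∧
    (∑' l : ℕ, a l * ι ((1 + s') * z) ^ l
      = ∑' q : ℕ, ι s' ^ q *
          ∑' j : ℕ, a (j + q) * ((j + q).choose q : L) * ι z ^ (j + q)) ∧
    (∀ q j : ℕ, ‖a (j + q) * ((j + q).choose q : L)‖ * (p : ℝ) ^ (-(m * (j + q) : ℤ))
      ≤ ⨆ l : ℕ, ‖a (l + q)‖ * (p : ℝ) ^ (-(m * (l + q) : ℤ))) ∧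
    Tendsto (fun q : ℕ =>
      (⨆ j : ℕ, ‖a (j + q) * ((j + q).choose q : L)‖ * (p : ℝ) ^ (-(m * (j + q) : ℤ)))
        * (p : ℝ) ^ (-(m * q : ℤ))) atTop (𝓝 0) := by
  have : IsUltrametricDist L := .isUltrametricDist_of_isNonarchimedean_norm hna
  set R : ℝ := (p : ℝ) ^ (-(m : ℤ))
  have hR₀ : 0 ≤ R := by positivity
  have hR₁ : R ≤ 1 :=
    zpow_le_one_of_nonpos₀ (by exact_mod_cast (Fact.out : p.Prime).one_le) (by omega)
  simp only [← Nat.cast_add, zpow_neg_natCast_mul] at ha ⊢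
  have hz' : ‖ι z‖ ≤ R := (hι z).trans_le hz
  have hs' : ‖ι s'‖ ≤ 1 := ((hι s').trans_le hs).trans hR₁
  have h_sum := hasSum_pow_mul_dilationCoeff ha hs' hz'
  rw [map_mul, map_add, map_one]
  exact ⟨summable_mul_pow ha (norm_one_add_mul_le hs' hz'), summable_dilationCoeff ha hz',
    h_sum.summable, h_sum.tsum_eq.symm, norm_mul_choose_mul_pow_le_iSup ha hR₀,
    tendsto_iSup_norm_mul_choose_mul_pow ha hR₀ hR₁⟩

theorem stmt_9 (p : ℕ) [Fact p.Prime] (L : Type*) [NontriviallyNormedField L]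
    [CompleteSpace L] (hna : IsNonarchimedean fun x : L => ‖x‖)
    (ι : ℚ_[p] →+* L) (hι : ∀ x, ‖ι x‖ = ‖x‖)
    (m : ℕ) (hm : 1 ≤ m) (a : ℕ → L)
    (ha : Tendsto (fun l : ℕ => ‖a l‖ * (p : ℝ) ^ (-(m * l : ℤ))) atTop (𝓝 0))
    (s' z : ℚ_[p]) (hs : ‖s'‖ ≤ (p : ℝ) ^ (-(m : ℤ))) (hz : ‖z‖ ≤ (p : ℝ) ^ (-(m : ℤ))) :
    Summable (fun l : ℕ => a l * ι ((1 + s') * z) ^ l) ∧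
    (∀ q : ℕ, Summable fun j : ℕ =>
      a (j + q) * ((j + q).choose q : L) * ι z ^ (j + q)) ∧
    Summable (fun q : ℕ => ι s' ^ q *
      ∑' j : ℕ, a (j + q) * ((j + q).choose q : L) * ι z ^ (j + q)) ∧
    (∑' l : ℕ, a l * ι ((1 + s') * z) ^ l
      = ∑' q : ℕ, ι s' ^ q *
          ∑' j : ℕ, a (j + q) * ((j + q).choose q : L) * ι z ^ (j + q)) ∧
    (∀ q j : ℕ, ‖a (j + q) * ((j + q).choose q : L)‖ * (p : ℝ) ^ (-(m * (j + q) : ℤ))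
      ≤ ⨆ l : ℕ, ‖a (l + q)‖ * (p : ℝ) ^ (-(m * (l + q) : ℤ))) ∧
    Tendsto (fun q : ℕ =>
      (⨆ j : ℕ, ‖a (j + q) * ((j + q).choose q : L)‖ * (p : ℝ) ^ (-(m * (j + q) : ℤ)))
        * (p : ℝ) ^ (-(m * q : ℤ))) atTop (𝓝 0) :=
  stmt_9_general p L hna ι hι m a ha s' z hs hz
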